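/- Let γ = ((i₁ j₁),…,(i_k j_k)) ∈ Σ_n(k) and let l, m ∈ {1,…,k} with l < m. If i_l = i_m, then j_l > j_m. -/

import Mathlib

/-- ℓ(σ): the number of cycles (orbits) of σ, including fixed points, counted via the
minimal representative of each orbit. -/
noncomputable def cycleCount {n : ℕ} (σ : Equiv.Perm (Fin n)) : ℕ :=
  Set.ncard {x : Fin n | ∀ y, σ.SameCycle x y → x ≤ y}

/-- |σ| := n − ℓ(σ). -/
noncomputable def normPerm {n : ℕ} (σ : Equiv.Perm (Fin n)) : ℕ := n - cycleCount σ

/-- σ₁ ≼ σ₂ iff |σ₂| = |σ₁| + |σ₁⁻¹σ₂|. -/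
def precLe {n : ℕ} (σ₁ σ₂ : Equiv.Perm (Fin n)) : Prop :=
  normPerm σ₂ = normPerm σ₁ + normPerm (σ₁⁻¹ * σ₂)

/-- Σ_n(k): tuples of k transpositions with |τ₁⋯τ_k| = k and τ₁⋯τ_k ≼ (1 … n). -/
def SigmaSet (n k : ℕ) : Set (Fin k → Equiv.Perm (Fin n)) :=
  {τ | (∀ l, (τ l).IsSwap) ∧ normPerm (List.ofFn τ).prod = k ∧
      precLe (List.ofFn τ).prod (finRotate n)}

/-- γ_m := τ₁∘⋯∘τ_m, the product of the first m entries of the chain. -/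
def gammaP {n k : ℕ} (τ : Fin k → Equiv.Perm (Fin n)) (m : ℕ) : Equiv.Perm (Fin n) :=
  ((List.ofFn τ).take m).prod

/-!
Right multiplication by a transposition `(a b)` merges the cycles of `a` and `b` if they are
distinct and splits their common cycle otherwise, so it changes `|·|` by exactly one. Along a
chain in `Σ_n(k)` every prefix product `γ_p` therefore has `|γ_p| = p`, each step merges two
cycles, and `γ_p ≼ c`. Every `σ ≼ c` has cycles that are increasing in the circular order of
`{1, …, n}`: induct on `|σ⁻¹c|`, since `c` is one increasing cycle and splitting a cycle by a
transposition of two of its points keeps cycles increasing.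

Let `a = i_l = i_m` and `β = γ_{m-1}`. Then `j_l` is in the `β`-cycle of `a` and `j_m` is not, and
increasingness gives `a < β a ≤ j_l`. If `j_l < j_m`, then in `β (a j_m)` the point `j_m` is
followed by `β a`, with `a` strictly between them circularly: that cycle is not increasing.
-/

open Equiv

namespace Equiv.Perm

variable {α : Type*} [Finite α] {f : Perm α} {a b x y : α}

@[elab_as_elim]
theorem SameCycle.induction_on {P : α → Prop} (h : f.SameCycle x y) (hx : P x)
    (hstep : ∀ z, f.SameCycle x z → P z → P (f z)) : P y := by
  have hpow : ∀ i : ℕ, P ((f ^ i) x) := by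
    intro i
    induction i with
    | zero => exact hx
    | succ i ih =>
      rw [pow_succ', mul_apply]
      exact hstep _ (sameCycle_pow_right.mpr SameCycle.rfl) ih
  obtain ⟨i, -, rfl⟩ := h.exists_pow_eq'
  exact hpow i

variable [DecidableEq α]

theorem SameCycle.cases_of_mul_swap (h : (f * swap a b).SameCycle x y) :
    f.SameCycle x y ∨ (f.SameCycle x a ∧ f.SameCycle b y) ∨
      (f.SameCycle x b ∧ f.SameCycle a y) := by
  refine h.induction_on (Or.inl SameCycle.rfl) fun z _ hz => ?_
  have hfa : f.SameCycle a (f a) := sameCycle_apply_right.mpr SameCycle.rfl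
  have hfb : f.SameCycle b (f b) := sameCycle_apply_right.mpr SameCycle.rfl
  rw [mul_apply]
  by_cases hza : z = a
  · subst hza
    rw [swap_apply_left]
    rcases hz with hxz | ⟨hxz, hbz⟩ | ⟨hxb, -⟩
    · exact Or.inr (Or.inl ⟨hxz, hfb⟩)
    · exact Or.inl (hxz.trans (hbz.symm.trans hfb))
    · exact Or.inl (hxb.trans hfb)
  by_cases hzb : z = b
  · subst hzb
    rw [swap_apply_right]
    rcases hz with hxz | ⟨hxa, -⟩ | ⟨hxz, haz⟩
    · exact Or.inr (Or.inr ⟨hxz, hfa⟩)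
    · exact Or.inl (hxa.trans hfa)
    · exact Or.inl (hxz.trans (haz.symm.trans hfa))
  rw [swap_apply_of_ne_of_ne hza hzb]
  rcases hz with hxz | ⟨hxa, hbz⟩ | ⟨hxb, haz⟩
  · exact Or.inl (sameCycle_apply_right.mpr hxz)
  · exact Or.inr (Or.inl ⟨hxa, sameCycle_apply_right.mpr hbz⟩)
  · exact Or.inr (Or.inr ⟨hxb, sameCycle_apply_right.mpr haz⟩)

theorem SameCycle.of_mul_swap_of_sameCycle (h : (f * swap a b).SameCycle x y)
    (hab : f.SameCycle a b) : f.SameCycle x y := by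
  rcases h.cases_of_mul_swap with h | ⟨hxa, hby⟩ | ⟨hxb, hay⟩
  · exact h
  · exact (hxa.trans hab).trans hby
  · exact (hxb.trans hab.symm).trans hay

theorem sameCycle_mul_swap_of_not_sameCycle (hab : ¬f.SameCycle a b) :
    (f * swap a b).SameCycle a b := by
  -- walk along the `f`-cycle of `b`, which `f * swap a b` traverses right after `a`
  have key : ∀ y, f.SameCycle (f b) y → (f * swap a b).SameCycle a y := by
    intro y hy
    refine hy.induction_on ⟨1, by simp⟩ fun z hbz haz => ?_
    have hzb : f.SameCycle b z := sameCycle_apply_left.mp hbz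
    have hza : z ≠ a := fun h => hab (h ▸ hzb).symm
    by_cases hzb' : z = b
    · subst hzb'
      exact ⟨1, by simp⟩
    · have : f z = (f * swap a b) z := by rw [mul_apply, swap_apply_of_ne_of_ne hza hzb']
      rw [this]
      exact sameCycle_apply_right.mpr haz
  exact key b (sameCycle_apply_left.mpr SameCycle.rfl)

theorem SameCycle.mul_swap_of_not_sameCycle (hab : ¬f.SameCycle a b) (h : f.SameCycle x y) :
    (f * swap a b).SameCycle x y := by
  have hmerged := sameCycle_mul_swap_of_not_sameCycle hab
  have h' : (f * swap a b * swap a b).SameCycle x y := by rwa [mul_swap_mul_self]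
  rcases h'.cases_of_mul_swap with h | ⟨hxa, hby⟩ | ⟨hxb, hay⟩
  · exact h
  · exact (hxa.trans hmerged).trans hby
  · exact (hxb.trans hmerged.symm).trans hay

theorem not_sameCycle_mul_swap_of_sameCycle (hne : a ≠ b) (hab : f.SameCycle a b) :
    ¬(f * swap a b).SameCycle a b := by
  have hex : ∃ d : ℕ, (f ^ d) b = a := hab.symm.exists_nat_pow_eq
  set d := Nat.find hex
  have hd : (f ^ d) b = a := Nat.find_spec hex
  have hlt_ne_a : ∀ i < d, (f ^ i) b ≠ a := fun i hi => Nat.find_min hex hi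
  have hd_pos : 0 < d := Nat.pos_of_ne_zero fun h0 => hne (by rw [← hd, h0]; rfl)
  have hne_b : ∀ i, 1 ≤ i → i ≤ d → (f ^ i) b ≠ b := by
    intro i hi hid hib
    refine hlt_ne_a (d - i) (by omega) ?_
    rw [← hib, ← mul_apply, ← pow_add, Nat.sub_add_cancel hid, hd]
  -- the arc `f b, f² b, …, f^d b = a` is closed under `f * swap a b` and avoids `b`
  let S : α → Prop := fun z => ∃ i, 1 ≤ i ∧ i ≤ d ∧ (f ^ i) b = z
  intro h
  obtain ⟨i, hi, hid, hib⟩ : S b := by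
    refine h.induction_on ⟨d, hd_pos, le_rfl, hd⟩ fun z _ ⟨i, hi, hid, hiz⟩ => ?_
    rw [mul_apply]
    rcases hid.lt_or_eq with hid | rfl
    · refine ⟨i + 1, by omega, hid, ?_⟩
      rw [← hiz, swap_apply_of_ne_of_ne (hlt_ne_a i hid) (hne_b i hi hid.le), pow_succ',
        mul_apply]
    · rw [← hiz, hd, swap_apply_left]
      exact ⟨1, le_rfl, hd_pos, by simp⟩
  exact hne_b i hi hid hib

end Equiv.Perm

open Equiv.Perm

section

variable {n : ℕ}

def cycleMins (σ : Perm (Fin n)) : Set (Fin n) := {x | ∀ y, σ.SameCycle x y → x ≤ y}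

theorem cycleCount_eq_ncard_cycleMins (σ : Perm (Fin n)) :
    cycleCount σ = (cycleMins σ).ncard := rfl

theorem exists_sameCycle_mem_cycleMins (σ : Perm (Fin n)) (x : Fin n) :
    ∃ m ∈ cycleMins σ, σ.SameCycle x m := by
  obtain ⟨m, hxm, hmin⟩ :=
    Set.exists_min_image {y | σ.SameCycle x y} id (Set.toFinite _) ⟨x, SameCycle.rfl⟩
  exact ⟨m, fun y hmy => hmin y (hxm.trans hmy), hxm⟩

theorem eq_of_mem_cycleMins {σ : Perm (Fin n)} {m m' : Fin n} (hm : m ∈ cycleMins σ)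
    (hm' : m' ∈ cycleMins σ) (h : σ.SameCycle m m') : m = m' :=
  le_antisymm (hm m' h) (hm' m h.symm)

theorem cycleMins_mul_swap {σ : Perm (Fin n)} {a b ma mb : Fin n} (hab : ¬σ.SameCycle a b)
    (hma : ma ∈ cycleMins σ) (ha : σ.SameCycle a ma) (hmb : mb ∈ cycleMins σ)
    (hb : σ.SameCycle b mb) (hlt : ma < mb) :
    cycleMins (σ * swap a b) = cycleMins σ \ {mb} := by
  ext x
  constructor
  · intro hx
    refine ⟨fun y hy => hx y (hy.mul_swap_of_not_sameCycle hab), fun hxmb => ?_⟩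
    rw [Set.mem_singleton_iff] at hxmb
    subst hxmb
    have : (σ * swap a b).SameCycle x ma :=
      ((hb.symm.mul_swap_of_not_sameCycle hab).trans
        (sameCycle_mul_swap_of_not_sameCycle hab).symm).trans (ha.mul_swap_of_not_sameCycle hab)
    exact (hx ma this).not_gt hlt
  · rintro ⟨hx, hxmb⟩ y hy
    rcases hy.cases_of_mul_swap with hxy | ⟨hxa, hby⟩ | ⟨hxb, -⟩
    · exact hx y hxy
    · rw [eq_of_mem_cycleMins hx hma (hxa.trans ha)]
      exact hlt.le.trans (hmb y (hb.symm.trans hby))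
    · exact absurd (eq_of_mem_cycleMins hx hmb (hxb.trans hb)) hxmb

theorem cycleCount_mul_swap_add_one {σ : Perm (Fin n)} {a b : Fin n} (hab : ¬σ.SameCycle a b) :
    cycleCount (σ * swap a b) + 1 = cycleCount σ := by
  obtain ⟨ma, hma, ha⟩ := exists_sameCycle_mem_cycleMins σ a
  obtain ⟨mb, hmb, hb⟩ := exists_sameCycle_mem_cycleMins σ b
  have hne : ma ≠ mb := fun h => hab (ha.trans (h ▸ hb.symm))
  simp only [cycleCount_eq_ncard_cycleMins]
  rcases hne.lt_or_gt with hlt | hlt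
  · rw [cycleMins_mul_swap hab hma ha hmb hb hlt]
    exact Set.ncard_sdiff_singleton_add_one hmb (Set.toFinite _)
  · rw [swap_comm, cycleMins_mul_swap (fun h => hab h.symm) hmb hb hma ha hlt]
    exact Set.ncard_sdiff_singleton_add_one hma (Set.toFinite _)

theorem cycleCount_le (σ : Perm (Fin n)) : cycleCount σ ≤ n := by
  rw [cycleCount_eq_ncard_cycleMins]
  simpa using Set.ncard_le_card (cycleMins σ)

theorem cycleCount_one : cycleCount (1 : Perm (Fin n)) = n := by
  have : cycleMins (1 : Perm (Fin n)) = Set.univ :=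
    Set.eq_univ_of_forall fun x y hxy => (sameCycle_one.mp hxy).le
  simp [cycleCount_eq_ncard_cycleMins, this]

theorem normPerm_one : normPerm (1 : Perm (Fin n)) = 0 := by
  simp [normPerm, cycleCount_one]

theorem normPerm_mul_swap_of_not_sameCycle {σ : Perm (Fin n)} {a b : Fin n}
    (hab : ¬σ.SameCycle a b) : normPerm (σ * swap a b) = normPerm σ + 1 := by
  have := cycleCount_mul_swap_add_one hab
  have := cycleCount_le σ
  simp only [normPerm]
  omega

theorem normPerm_mul_swap_add_one {σ : Perm (Fin n)} {a b : Fin n} (hne : a ≠ b)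
    (hab : σ.SameCycle a b) : normPerm (σ * swap a b) + 1 = normPerm σ := by
  simpa [mul_swap_mul_self] using
    (normPerm_mul_swap_of_not_sameCycle (not_sameCycle_mul_swap_of_sameCycle hne hab)).symm

theorem normPerm_mul_swap_le (σ : Perm (Fin n)) (a b : Fin n) :
    normPerm (σ * swap a b) ≤ normPerm σ + 1 := by
  by_cases hne : a = b
  · rw [hne, swap_self, ← Perm.one_def, mul_one]
    omega
  by_cases hab : σ.SameCycle a b
  · have := normPerm_mul_swap_add_one hne hab
    omega
  · exact (normPerm_mul_swap_of_not_sameCycle hab).le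

theorem not_sameCycle_of_normPerm_mul_swap {σ : Perm (Fin n)} {a b : Fin n}
    (h : normPerm (σ * swap a b) = normPerm σ + 1) : ¬σ.SameCycle a b := by
  intro hab
  by_cases hne : a = b
  · rw [hne, swap_self, ← Perm.one_def, mul_one] at h
    omega
  · have := normPerm_mul_swap_add_one hne hab
    omega

theorem normPerm_mul_le (σ π : Perm (Fin n)) :
    normPerm (σ * π) ≤ normPerm σ + normPerm π := by
  induction hN : normPerm π using Nat.strong_induction_on generalizing π with
  | _ N ih =>
  by_cases hπ : π = 1
  · simp [hπ]
  obtain ⟨x, hx⟩ : ∃ x, π x ≠ x := not_forall.mp fun h => hπ (Equiv.ext h)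
  set π' := π * swap x (π x)
  have hπ' : normPerm π' + 1 = N :=
    hN ▸ normPerm_mul_swap_add_one (Ne.symm hx) (sameCycle_apply_right.mpr SameCycle.rfl)
  calc normPerm (σ * π) = normPerm (σ * π' * swap x (π x)) := by
        rw [mul_assoc, mul_swap_mul_self]
    _ ≤ normPerm (σ * π') + 1 := normPerm_mul_swap_le _ _ _
    _ ≤ normPerm σ + normPerm π' + 1 := by grw [ih _ (by omega) π' rfl]
    _ = normPerm σ + N := by omega

theorem normPerm_swap_mul_le (σ : Perm (Fin n)) (a b : Fin n) :
    normPerm (swap a b * σ) ≤ normPerm σ + 1 := by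
  have hswap : normPerm (swap a b) ≤ 1 := by
    simpa [normPerm_one] using normPerm_mul_swap_le (1 : Perm (Fin n)) a b
  grw [normPerm_mul_le, hswap, add_comm]

theorem precLe_of_mul_swap {σ π : Perm (Fin n)} {a b : Fin n}
    (hσ : normPerm (σ * swap a b) = normPerm σ + 1) (h : precLe (σ * swap a b) π) :
    precLe σ π := by
  have hinv : σ⁻¹ * π = swap a b * ((σ * swap a b)⁻¹ * π) := by
    rw [mul_inv_rev, swap_inv, ← mul_assoc, ← mul_assoc, swap_mul_self, one_mul]
  have hle := normPerm_swap_mul_le ((σ * swap a b)⁻¹ * π) a b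
  have hge : normPerm π ≤ normPerm σ + normPerm (σ⁻¹ * π) := by
    simpa using normPerm_mul_le σ (σ⁻¹ * π)
  unfold precLe at h ⊢
  rw [← hinv] at hle
  omega

/-- `σ` sends each `x` to the element of its cycle that comes next in the circular order of
`Fin n`. -/
def HasIncreasingCycles (σ : Perm (Fin n)) : Prop :=
  ∀ x y, σ.SameCycle x y → ¬sbtw x y (σ x)

theorem hasIncreasingCycles_finRotate : HasIncreasingCycles (finRotate n) := by
  intro x y _ hxy
  cases n with
  | zero => exact x.elim0
  | succ m =>
    rw [finRotate_apply, Fin.sbtw_iff] at hxy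
    simp only [Fin.lt_def, Fin.val_add_one] at hxy
    split_ifs at hxy with hx <;> simp only [Fin.ext_iff, Fin.val_last] at hx <;> omega

theorem sbtw_of_not_sbtw {u v w w' : Fin n} (h : sbtw u w' v) (h' : ¬sbtw u w v) (hw : w ≠ u) :
    sbtw w u w' := by
  simp only [Fin.sbtw_iff, Fin.lt_def] at *
  omega

theorem HasIncreasingCycles.not_sbtw_mul_swap {σ' : Perm (Fin n)} {u v : Fin n}
    (hσ' : HasIncreasingCycles σ') (hne : u ≠ v) (huv : σ'.SameCycle u v) {y : Fin n}
    (hy : (σ' * swap u v).SameCycle u y) : ¬sbtw u y (σ' v) := by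
  have hsplit := not_sameCycle_mul_swap_of_sameCycle hne huv
  refine hy.induction_on (sbtw_irrefl_left (a := u)) fun z huz hz => ?_
  have hzv : z ≠ v := fun h => hsplit (h ▸ huz)
  rw [mul_apply]
  by_cases hzu : z = u
  · rw [hzu, swap_apply_left]
    exact sbtw_irrefl_right
  · rw [swap_apply_of_ne_of_ne hzu hzv]
    exact fun h => hσ' z u (huz.of_mul_swap_of_sameCycle huv).symm (sbtw_of_not_sbtw h hz hzu)

theorem HasIncreasingCycles.mul_swap {σ' : Perm (Fin n)} {u v : Fin n}
    (hσ' : HasIncreasingCycles σ') (hne : u ≠ v) (huv : σ'.SameCycle u v) :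
    HasIncreasingCycles (σ' * swap u v) := by
  intro x y hxy
  by_cases hxu : x = u
  · subst hxu
    rw [mul_apply, swap_apply_left]
    exact hσ'.not_sbtw_mul_swap hne huv hxy
  by_cases hxv : x = v
  · subst hxv
    rw [mul_apply, swap_apply_right]
    rw [swap_comm] at hxy
    exact hσ'.not_sbtw_mul_swap hne.symm huv.symm hxy
  rw [mul_apply, swap_apply_of_ne_of_ne hxu hxv]
  exact hσ' x y (hxy.of_mul_swap_of_sameCycle huv)

theorem HasIncreasingCycles.of_precLe {σ : Perm (Fin n)} (h : precLe σ (finRotate n)) :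
    HasIncreasingCycles σ := by
  induction hN : normPerm (σ⁻¹ * finRotate n) using Nat.strong_induction_on generalizing σ with
  | _ N ih =>
  obtain ⟨δ, hδ⟩ : ∃ δ, σ⁻¹ * finRotate n = δ := ⟨_, rfl⟩
  rw [precLe, hδ] at h
  rw [hδ] at hN
  by_cases hδ1 : δ = 1
  · rw [inv_mul_eq_one.mp (hδ.trans hδ1)]
    exact hasIncreasingCycles_finRotate
  obtain ⟨z, hz⟩ : ∃ z, δ z ≠ z := not_forall.mp fun h => hδ1 (Equiv.ext h)
  -- `t * δ = δ * swap z (δ z)` has one cycle more than `δ`; move `t` over to `σ`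
  set t := swap (δ z) (δ (δ z))
  have htne : δ z ≠ δ (δ z) := fun h => hz (δ.injective h).symm
  have htδ : normPerm (t * δ) + 1 = normPerm δ := by
    rw [← mul_swap_eq_swap_mul]
    exact normPerm_mul_swap_add_one (Ne.symm hz) (sameCycle_apply_right.mpr SameCycle.rfl)
  have hσt : (σ * t)⁻¹ * finRotate n = t * δ := by
    rw [mul_inv_rev, swap_inv, mul_assoc, hδ]
  have htri : normPerm (finRotate n) ≤ normPerm (σ * t) + normPerm (t * δ) := by
    have := normPerm_mul_le (σ * t) ((σ * t)⁻¹ * finRotate n)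
    rwa [mul_inv_cancel_left, hσt] at this
  have hσt_le : normPerm (σ * t) ≤ normPerm σ + 1 := normPerm_mul_swap_le _ _ _
  have hmerge : normPerm (σ * t) = normPerm σ + 1 := by omega
  have hσt_inc : HasIncreasingCycles (σ * t) :=
    ih (normPerm (t * δ)) (by omega) (by rw [precLe, hσt]; omega) (by rw [hσt])
  simpa [t, mul_swap_mul_self] using hσt_inc.mul_swap htne
    (sameCycle_mul_swap_of_not_sameCycle (not_sameCycle_of_normPerm_mul_swap hmerge))

theorem HasIncreasingCycles.lt_of_mul_swap {β : Perm (Fin n)} {a b c : Fin n}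
    (hβ : HasIncreasingCycles β) (hβ' : HasIncreasingCycles (β * swap a b))
    (hac : β.SameCycle a c) (hab : ¬β.SameCycle a b) (ha_c : a < c) : b < c := by
  have hβa : a < β a ∧ β a ≤ c := by
    have hfix : β a ≠ a := fun h => ha_c.ne (hac.eq_of_left h)
    have := hβ a c hac
    simp only [Fin.sbtw_iff, Fin.lt_def, Fin.le_def, ne_eq, Fin.ext_iff] at this hfix ha_c ⊢
    omega
  have hbc : b ≠ c := fun h => hab (h ▸ hac)
  refine lt_of_le_of_ne (not_lt.mp fun hcb => ?_) hbc
  apply hβ' b a (sameCycle_mul_swap_of_not_sameCycle hab).symm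
  rw [mul_apply, swap_apply_right, Fin.sbtw_iff]
  exact Or.inr (Or.inl ⟨hβa.1, hβa.2.trans_lt hcb⟩)

section Chains

variable {k : ℕ} {τ : Fin k → Perm (Fin n)}

theorem gammaP_zero (τ : Fin k → Perm (Fin n)) : gammaP τ 0 = 1 := by
  simp [gammaP]

theorem gammaP_succ (τ : Fin k → Perm (Fin n)) {p : ℕ} (hp : p < k) :
    gammaP τ (p + 1) = gammaP τ p * τ ⟨p, hp⟩ := by
  simp [gammaP, List.prod_take_succ, hp]

theorem gammaP_self (τ : Fin k → Perm (Fin n)) : gammaP τ k = (List.ofFn τ).prod := by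
  rw [gammaP, List.take_of_length_le (by simp)]

theorem normPerm_gammaP_le (hτ : ∀ q, (τ q).IsSwap) : ∀ p ≤ k, normPerm (gammaP τ p) ≤ p
  | 0, _ => by simp [gammaP_zero, normPerm_one]
  | p + 1, hp => by
    obtain ⟨a, b, -, hab⟩ := hτ ⟨p, hp⟩
    grw [gammaP_succ τ hp, hab, normPerm_mul_swap_le, normPerm_gammaP_le hτ p (by omega)]

theorem normPerm_gammaP (hτ : ∀ q, (τ q).IsSwap) (hk : normPerm (List.ofFn τ).prod = k)
    {p : ℕ} (hp : p ≤ k) : normPerm (gammaP τ p) = p := by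
  induction hp using Nat.decreasingInduction with
  | self => rwa [gammaP_self]
  | of_succ p hp ih =>
    obtain ⟨a, b, -, hab⟩ := hτ ⟨p, hp⟩
    have hstep := normPerm_mul_swap_le (gammaP τ p) a b
    rw [← hab, ← gammaP_succ τ hp] at hstep
    have := normPerm_gammaP_le hτ p hp.le
    omega

theorem not_sameCycle_gammaP (hτ : ∀ q, (τ q).IsSwap) (hk : normPerm (List.ofFn τ).prod = k)
    {p : ℕ} (hp : p < k) {a b : Fin n} (hab : τ ⟨p, hp⟩ = swap a b) :
    ¬(gammaP τ p).SameCycle a b := by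
  refine not_sameCycle_of_normPerm_mul_swap ?_
  rw [← hab, ← gammaP_succ, normPerm_gammaP hτ hk hp, normPerm_gammaP hτ hk hp.le]

theorem precLe_gammaP (hτ : ∀ q, (τ q).IsSwap) (hk : normPerm (List.ofFn τ).prod = k)
    {π : Perm (Fin n)} (hπ : precLe (List.ofFn τ).prod π) {p : ℕ} (hp : p ≤ k) :
    precLe (gammaP τ p) π := by
  induction hp using Nat.decreasingInduction with
  | self => rwa [gammaP_self]
  | of_succ p hp ih =>
    obtain ⟨a, b, -, hab⟩ := hτ ⟨p, hp⟩
    rw [gammaP_succ τ hp, hab] at ih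
    refine precLe_of_mul_swap ?_ ih
    rw [← hab, ← gammaP_succ τ hp, normPerm_gammaP hτ hk hp, normPerm_gammaP hτ hk hp.le]

theorem sameCycle_gammaP_of_le (hτ : ∀ q, (τ q).IsSwap) (hk : normPerm (List.ofFn τ).prod = k)
    {p p' : ℕ} {x y : Fin n} (h : (gammaP τ p).SameCycle x y) (hpp' : p ≤ p') (hp' : p' ≤ k) :
    (gammaP τ p').SameCycle x y := by
  induction p', hpp' using Nat.le_induction with
  | base => exact h
  | succ p' hpp' ih =>
    obtain ⟨a, b, -, hab⟩ := hτ ⟨p', hp'⟩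
    rw [gammaP_succ τ hp', hab]
    exact (ih (by omega)).mul_swap_of_not_sameCycle (not_sameCycle_gammaP hτ hk hp' hab)

end Chains

end

/-- If γ = ((i₁ j₁),…,(i_k j_k)) ∈ Σ_n(k), l < m and i_l = i_m, then j_l > j_m. -/
theorem stmt8 (n k : ℕ) (i j : Fin k → Fin n) (hij : ∀ l, i l < j l)
    (hγ : (fun l => Equiv.swap (i l) (j l)) ∈ SigmaSet n k)
    (l m : Fin k) (hlm : l < m) (h : i l = i m) :
    j m < j l := by
  set τ : Fin k → Perm (Fin n) := fun l => swap (i l) (j l)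
  obtain ⟨hτ, hk, hc⟩ := hγ
  have hmerge (q : Fin k) : ¬(gammaP τ q).SameCycle (i q) (j q) :=
    not_sameCycle_gammaP hτ hk q.isLt rfl
  have hinc {p : ℕ} (hp : p ≤ k) := HasIncreasingCycles.of_precLe (precLe_gammaP hτ hk hc hp)
  have hl : (gammaP τ m).SameCycle (i m) (j l) := by
    rw [← h]
    refine sameCycle_gammaP_of_le hτ hk ?_ hlm m.isLt.le
    rw [gammaP_succ τ l.isLt]
    exact sameCycle_mul_swap_of_not_sameCycle (hmerge l)
  refine (hinc m.isLt.le).lt_of_mul_swap ?_ hl (hmerge m) (h ▸ hij l)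
  rw [← gammaP_succ τ m.isLt]
  exact hinc m.isLt
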